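/- arXiv:2206.07141 — 2 statements merged into one kernel-verified Lean document; each statement's English description precedes it below -/
import Mathlib

section
/- Let G be a Hausdorff topological group with subgroups A and B such that C = A ∩ B is an open subgroup of G containing a compact open subgroup of G, and G splits as the amalgamated free product A ∗_C B. If G and C are compactly generated, then A and B (with the subspace topology) are compactly generated. -/
open MulAction

universe u v

/-- A topological group is compactly generated if it has a compact subset that
generates it algebraically. -/
def IsCompactlyGeneratedGroup (G : Type*) [Group G] [TopologicalSpace G] : Prop :=
  ∃ S : Set G, IsCompact S ∧ Subgroup.closure S = ⊤

/-- A topological group `G` is compactly presented if there are a compact generating set `S`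
and `n : ℕ` such that the kernel of the canonical map `FreeGroup S →* G` is generated as a
normal subgroup by its elements of word length at most `n`. -/
def IsCompactlyPresentedGroup (G : Type*) [Group G] [TopologicalSpace G] : Prop :=
  ∃ (S : Set G) (n : ℕ), IsCompact S ∧ Subgroup.closure S = ⊤ ∧
    Subgroup.normalClosure
      {x : FreeGroup S |
        x ∈ (FreeGroup.lift (fun s : S => (s : G))).ker ∧
          ∃ l : List (S × Bool), FreeGroup.mk l = x ∧ l.length ≤ n} =
      (FreeGroup.lift (fun s : S => (s : G))).ker

/-- A topological group is coherent if every closed compactly generated subgroup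
(with the subspace topology) is compactly presented. -/
def IsCoherentGroup (G : Type*) [Group G] [TopologicalSpace G] : Prop :=
  ∀ Q : Subgroup G, IsClosed (Q : Set G) → IsCompactlyGeneratedGroup Q →
    IsCompactlyPresentedGroup Q

section Amalgam

variable {G : Type u} [Group G]

/-- The two-element family of groups `A`, `B`. -/
def amalgamFamily (A B : Subgroup G) : Bool → Type u := fun b => match b with
  | true => A
  | false => B

instance (A B : Subgroup G) : (b : Bool) → Group (amalgamFamily A B b)
  | true => inferInstanceAs (Group A)
  | false => inferInstanceAs (Group B)

/-- The inclusions of `C = A ⊓ B` into `A` and `B`. -/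
def amalgamMaps (A B : Subgroup G) : (b : Bool) → (↥(A ⊓ B) →* amalgamFamily A B b)
  | true => Subgroup.inclusion inf_le_left
  | false => Subgroup.inclusion inf_le_right

/-- The inclusions of `A` and `B` into `G`. -/
def amalgamProj (A B : Subgroup G) : (b : Bool) → (amalgamFamily A B b →* G)
  | true => A.subtype
  | false => B.subtype

/-- The canonical homomorphism from the pushout (in the category of groups) of the
inclusions `A ⊓ B ↪ A` and `A ⊓ B ↪ B` to `G`. -/
def amalgamCanonicalHom (A B : Subgroup G) : Monoid.PushoutI (amalgamMaps A B) →* G :=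
  Monoid.PushoutI.lift (amalgamProj A B) (A ⊓ B).subtype
    (by rintro (_ | _) <;> exact MonoidHom.ext fun x => rfl)

/-- `G` splits as the amalgamated free product `A ∗_(A ⊓ B) B` if the canonical homomorphism
from the pushout of the inclusions to `G` is bijective. -/
def IsAmalgamatedProduct (A B : Subgroup G) : Prop :=
  Function.Bijective (amalgamCanonicalHom A B)

end Amalgam

section Graphs

variable {V : Type v}

/-- The graph obtained from `Γ` by deleting the vertex `v` (making it isolated). -/
def SimpleGraph.deleteVertex (Γ : SimpleGraph V) (v : V) : SimpleGraph V where
  Adj a b := Γ.Adj a b ∧ a ≠ v ∧ b ≠ v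
  symm := ⟨fun a b h => ⟨Γ.symm.symm a b h.1, h.2.2, h.2.1⟩⟩
  loopless := ⟨fun a h => Γ.loopless.irrefl a h.1⟩

/-- `Γ` is fine at `v` if for every neighbour `x` of `v` and every `n`, there are only
finitely many neighbours of `v` joined to `x` by a path of length at most `n` avoiding `v`;
i.e. balls of the angle metric on the neighbours of `v` are finite. -/
def SimpleGraph.FineAt (Γ : SimpleGraph V) (v : V) : Prop :=
  ∀ x ∈ Γ.neighborSet v, ∀ n : ℕ,
    {y | y ∈ Γ.neighborSet v ∧ ∃ p : (Γ.deleteVertex v).Walk x y, p.length ≤ n}.Finite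

/-- A graph is fine if it is fine at every vertex. -/
def SimpleGraph.Fine (Γ : SimpleGraph V) : Prop := ∀ v : V, Γ.FineAt v

/-- A connected graph is hyperbolic if its path metric satisfies the four point condition
up to an additive constant. -/
def SimpleGraph.IsHyperbolic (Γ : SimpleGraph V) : Prop :=
  ∃ δ : ℝ, 0 ≤ δ ∧ ∀ x y z w : V,
    (Γ.dist x y + Γ.dist z w : ℝ) ≤
      max ((Γ.dist x z + Γ.dist y w : ℝ)) ((Γ.dist x w + Γ.dist y z : ℝ)) + δ

/-- Two graphs (with their path metrics) are quasi-isometric. -/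
def QuasiIsometricGraphs {V₁ : Type*} {V₂ : Type*}
    (Γ₁ : SimpleGraph V₁) (Γ₂ : SimpleGraph V₂) : Prop :=
  ∃ (f : V₁ → V₂) (L C : ℝ), 1 ≤ L ∧ 0 ≤ C ∧
    (∀ x y : V₁,
      L⁻¹ * (Γ₁.dist x y : ℝ) - C ≤ (Γ₂.dist (f x) (f y) : ℝ) ∧
      (Γ₂.dist (f x) (f y) : ℝ) ≤ L * (Γ₁.dist x y : ℝ) + C) ∧
    ∀ z : V₂, ∃ x : V₁, (Γ₂.dist z (f x) : ℝ) ≤ C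

end Graphs

section GGraphs

variable (G : Type u) [Group G] [TopologicalSpace G] {V : Type v} [MulAction G V]

/-- The action of `G` on the vertices of `Γ` is by graph automorphisms. -/
def IsGraphAction (Γ : SimpleGraph V) : Prop :=
  ∀ (g : G) (a b : V), Γ.Adj a b → Γ.Adj (g • a) (g • b)

/-- The action is discrete: all vertex stabilizers are open. -/
def IsDiscreteAction (Γ : SimpleGraph V) : Prop :=
  ∀ v : V, IsOpen ((stabilizer G v : Subgroup G) : Set G)

/-- The action is cocompact: finitely many orbits of vertices and of edges. -/
def IsCocompactAction (Γ : SimpleGraph V) : Prop :=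
  (∃ s : Set V, s.Finite ∧ ∀ v : V, ∃ g : G, g • v ∈ s) ∧
  (∃ t : Set (V × V), t.Finite ∧ ∀ a b : V, Γ.Adj a b → ∃ g : G, (g • a, g • b) ∈ t)

/-- Pointwise edge stabilizers are compact. -/
def HasCompactEdgeStabilizers (Γ : SimpleGraph V) : Prop :=
  ∀ a b : V, Γ.Adj a b →
    IsCompact ((stabilizer G a ⊓ stabilizer G b : Subgroup G) : Set G)

/-- The conjugate `g H g⁻¹` of a subgroup. -/
def conjSubgroup {G : Type u} [Group G] (g : G) (H : Subgroup G) : Subgroup G :=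
  Subgroup.map (MulAut.conj g).toMonoidHom H

/-- A proper pair: `G` has a compact open subgroup, `ℋ` is a finite collection of open
subgroups, and no two distinct non-compact members of `ℋ` are conjugate. -/
def IsProperPair (G : Type u) [Group G] [TopologicalSpace G]
    (ℋ : Finset (Subgroup G)) : Prop :=
  (∃ U : Subgroup G, IsCompact (U : Set G) ∧ IsOpen (U : Set G)) ∧
  (∀ H ∈ ℋ, IsOpen ((H : Subgroup G) : Set G)) ∧
  (∀ H ∈ ℋ, ∀ K ∈ ℋ, ¬ IsCompact ((H : Subgroup G) : Set G) →
    ¬ IsCompact ((K : Subgroup G) : Set G) →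
    (∃ g : G, conjSubgroup g H = K) → H = K)

/-- `Γ` is a Cayley-Abels graph of `G` with respect to `ℋ`. -/
def IsCayleyAbelsGraph (ℋ : Finset (Subgroup G)) (Γ : SimpleGraph V) : Prop :=
  IsGraphAction G Γ ∧
  Γ.Connected ∧
  IsDiscreteAction G Γ ∧
  IsCocompactAction G Γ ∧
  HasCompactEdgeStabilizers G Γ ∧
  (∀ v : V, IsCompact ((stabilizer G v : Subgroup G) : Set G) ∨
    ∃ H ∈ ℋ, ∃ g : G, stabilizer G v = conjSubgroup g H) ∧
  (∀ H ∈ ℋ, ∃ v : V, stabilizer G v = H) ∧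
  (∀ H ∈ ℋ, ¬ IsCompact ((H : Subgroup G) : Set G) →
    ∀ u v : V, stabilizer G u = H → stabilizer G v = H → ∃ g : G, g • u = v)

end GGraphs

/-!
Cover a compact generating set of `G` by finitely many cosets `gC` of the open subgroup
`C = A ⊓ B`. Each `g` is a finite product of elements of `A ∪ B`, so `G` is generated by `C`
together with a finite set `F ⊆ A ∪ B`. Put `A₁ = ⟨C, F ∩ A⟩` and `B₁ = ⟨C, F ∩ B⟩`. Every element
of `⟨A₁, B₁⟩` is `c · w` with `c ∈ C` and `w` a reduced word with letters in `A₁ ∪ B₁`; by the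
normal form theorem for amalgamated products, such an element lies in `A` only if `w` has at most
one letter, which then lies in `A₁`. Hence `A = A₁`, which is generated by a compact generating
set of `C` together with the finite set `F ∩ A`; likewise for `B`.
-/

namespace Monoid.PushoutI

open CoprodI

variable {ι : Type*} {G : ι → Type*} {H : Type*} [∀ i, Group (G i)] [Group H]
  {φ : ∀ i, H →* G i}

theorem Reduced.map_fst_eq_of_prod_eq (hφ : ∀ i, Function.Injective (φ i))
    {w w' : Word G} (hw : Reduced φ w) (hw' : Reduced φ w')
    (h : ofCoprodI (φ := φ) w.prod = ofCoprodI w'.prod) :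
    w.toList.map Sigma.fst = w'.toList.map Sigma.fst := by
  obtain ⟨d⟩ := NormalWord.transversal_nonempty φ hφ
  obtain ⟨n, hn, hnw⟩ := hw.exists_normalWord_prod_eq d
  obtain ⟨n', hn', hnw'⟩ := hw'.exists_normalWord_prod_eq d
  rw [← hnw, ← hnw', NormalWord.prod_injective (hn.trans (h.trans hn'.symm))]

variable (φ) in
def HasReducedFormIn (K : ∀ i, Subgroup (G i)) (x : PushoutI φ) : Prop :=
  ∃ (h : H) (w : Word G), Reduced φ w ∧ (∀ p ∈ w.toList, p.2 ∈ K p.1) ∧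
    base φ h * ofCoprodI w.prod = x

variable {K : ∀ i, Subgroup (G i)}

theorem hasReducedFormIn_of_mul_prod_of_fstIdx_ne {i : ι} {g : G i} (hg : g ∈ K i)
    {w : Word G} (hw : Reduced φ w) (hwK : ∀ p ∈ w.toList, p.2 ∈ K p.1)
    (hi : w.fstIdx ≠ some i) : HasReducedFormIn φ K (of i g * ofCoprodI w.prod) := by
  by_cases hgφ : g ∈ (φ i).range
  · obtain ⟨h, rfl⟩ := hgφ
    exact ⟨h, w, hw, hwK, by rw [of_apply_eq_base]⟩
  have hg1 : g ≠ 1 := fun h1 => hgφ (h1 ▸ one_mem _)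
  refine ⟨1, Word.cons g w hi hg1, ?_, ?_, ?_⟩
  · simpa only [Reduced, Word.cons_toList, List.forall_mem_cons] using ⟨hgφ, hw⟩
  · simpa only [Word.cons_toList, List.forall_mem_cons] using ⟨hg, hwK⟩
  · rw [Word.prod_cons, map_mul, ofCoprodI_of, map_one, one_mul]

theorem hasReducedFormIn_of_mul_prod {i : ι} {g : G i} (hg : g ∈ K i)
    {w : Word G} (hw : Reduced φ w) (hwK : ∀ p ∈ w.toList, p.2 ∈ K p.1) :
    HasReducedFormIn φ K (of i g * ofCoprodI w.prod) := by
  induction w using Word.consRecOn with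
  | empty => exact hasReducedFormIn_of_mul_prod_of_fstIdx_ne hg hw hwK (by simp [Word.fstIdx])
  | cons j m w hj hm _ =>
    simp only [Reduced, Word.cons_toList, List.forall_mem_cons] at hw hwK
    by_cases hji : j = i
    · subst hji
      rw [Word.prod_cons, map_mul, ofCoprodI_of, ← mul_assoc, ← map_mul]
      exact hasReducedFormIn_of_mul_prod_of_fstIdx_ne (mul_mem hg hwK.1) hw.2 hwK.2 hj
    · refine hasReducedFormIn_of_mul_prod_of_fstIdx_ne hg ?_ ?_ (by simpa using hji)
      · simpa [Reduced] using hw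
      · simpa using hwK

theorem HasReducedFormIn.of_mul (hK : ∀ i, (φ i).range ≤ K i) {i : ι} {g : G i}
    (hg : g ∈ K i) {x : PushoutI φ} (hx : HasReducedFormIn φ K x) :
    HasReducedFormIn φ K (of i g * x) := by
  obtain ⟨h, w, hw, hwK, rfl⟩ := hx
  rw [← of_apply_eq_base φ i, ← mul_assoc, ← map_mul]
  exact hasReducedFormIn_of_mul_prod (mul_mem hg (hK i ⟨h, rfl⟩)) hw hwK

theorem hasReducedFormIn_of_mem_iSup (hK : ∀ i, (φ i).range ≤ K i) {x : PushoutI φ}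
    (hx : x ∈ ⨆ i, (K i).map (of i)) : HasReducedFormIn φ K x := by
  rw [Subgroup.iSup_eq_closure] at hx
  induction hx using Subgroup.closure_induction_left with
  | one => exact ⟨1, .empty, by simp [Reduced], by simp, by simp⟩
  | mul_left x hx y _ ih =>
    obtain ⟨i, g, hg, rfl⟩ : ∃ i, ∃ g ∈ K i, of i g = x := by simpa using hx
    exact ih.of_mul hK hg
  | inv_mul_cancel x hx y _ ih =>
    obtain ⟨i, g, hg, rfl⟩ : ∃ i, ∃ g ∈ K i, of i g = x := by simpa using hx
    rw [← map_inv]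
    exact ih.of_mul hK (inv_mem hg)

theorem mem_of_of_mem_iSup (hφ : ∀ i, Function.Injective (φ i))
    (hK : ∀ i, (φ i).range ≤ K i) {i : ι} {g : G i}
    (hg : of (φ := φ) i g ∈ ⨆ j, (K j).map (of j)) : g ∈ K i := by
  obtain ⟨h, w, hw, hwK, hprod⟩ := hasReducedFormIn_of_mem_iSup hK hg
  set g' := φ i h⁻¹ * g
  have hg' : g = φ i h * g' := by simp [g']
  by_cases hg'φ : g' ∈ (φ i).range
  · exact hg' ▸ mul_mem (hK i ⟨h, rfl⟩) (hK i hg'φ)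
  have hg'1 : g' ≠ 1 := fun h1 => hg'φ (h1 ▸ one_mem _)
  let w' : Word G := Word.cons g' .empty (by simp [Word.fstIdx]) hg'1
  have hw' : Reduced φ w' := by simpa [Reduced, w'] using hg'φ
  have hprod' : ofCoprodI (φ := φ) w.prod = ofCoprodI w'.prod := by
    rw [Word.prod_cons, Word.prod_empty, mul_one, ofCoprodI_of, map_mul, of_apply_eq_base,
      map_inv, ← hprod, inv_mul_cancel_left]
  obtain ⟨⟨j, b⟩, hwb, rfl⟩ : ∃ p, w.toList = [p] ∧ p.1 = i :=
    List.map_eq_singleton_iff.mp (hw.map_fst_eq_of_prod_eq hφ hw' hprod')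
  have hbg' : b = g' := by
    apply of_injective hφ
    simpa [Word.prod, hwb, w'] using hprod'
  exact hg' ▸ mul_mem (hK _ ⟨h, rfl⟩) (hbg' ▸ hwK _ (by simp [hwb]))

end Monoid.PushoutI

section Amalgam

variable {G : Type u} [Group G] {A B : Subgroup G}

theorem amalgamMaps_injective (A B : Subgroup G) (i : Bool) :
    Function.Injective (amalgamMaps A B i) := by
  cases i
  exacts [Subgroup.inclusion_injective inf_le_right, Subgroup.inclusion_injective inf_le_left]

theorem amalgamCanonicalHom_of (i : Bool) (g : amalgamFamily A B i) :
    amalgamCanonicalHom A B (Monoid.PushoutI.of i g) = amalgamProj A B i g :=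
  Monoid.PushoutI.lift_of _ _ _ _

theorem IsAmalgamatedProduct.sup_eq_top (hsplit : IsAmalgamatedProduct A B) : A ⊔ B = ⊤ := by
  rw [eq_top_iff]
  rintro x -
  obtain ⟨p, rfl⟩ := hsplit.2 x
  induction p using Monoid.PushoutI.induction_on with
  | of i g =>
    rw [amalgamCanonicalHom_of]
    cases i
    exacts [Subgroup.mem_sup_right g.2, Subgroup.mem_sup_left g.2]
  | base c =>
    rw [amalgamCanonicalHom, Monoid.PushoutI.lift_base]
    exact Subgroup.mem_sup_left c.2.1
  | mul x y hx hy => exact map_mul (amalgamCanonicalHom A B) x y ▸ mul_mem hx hy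

theorem amalgamProj_range (A B : Subgroup G) (i : Bool) :
    (amalgamProj A B i).range = cond i A B := by
  cases i
  exacts [B.range_subtype, A.range_subtype]

theorem IsAmalgamatedProduct.sup_inf_le (hsplit : IsAmalgamatedProduct A B)
    {A₁ B₁ : Subgroup G} (hA₁A : A₁ ≤ A) (hB₁B : B₁ ≤ B) (hA₁ : A ⊓ B ≤ A₁) (hB₁ : A ⊓ B ≤ B₁)
    (i : Bool) : (A₁ ⊔ B₁) ⊓ cond i A B ≤ cond i A₁ B₁ := by
  let K i : Subgroup (amalgamFamily A B i) := (cond i A₁ B₁).comap (amalgamProj A B i)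
  have hK i : (amalgamMaps A B i).range ≤ K i := by
    rintro _ ⟨c, rfl⟩
    cases i
    exacts [hB₁ c.2, hA₁ c.2]
  have hmap : (⨆ j, (K j).map (Monoid.PushoutI.of j)).map (amalgamCanonicalHom A B) =
      A₁ ⊔ B₁ := by
    have hcomp j : (amalgamCanonicalHom A B).comp (Monoid.PushoutI.of j) = amalgamProj A B j :=
      MonoidHom.ext (amalgamCanonicalHom_of j)
    rw [Subgroup.map_iSup, iSup_bool_eq]
    simp only [K, Subgroup.map_map, hcomp, Subgroup.map_comap_eq, amalgamProj_range, cond_true,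
      cond_false, inf_of_le_right hA₁A, inf_of_le_right hB₁B]
  intro x hx
  obtain ⟨hx, hxi⟩ := Subgroup.mem_inf.1 hx
  obtain ⟨g, rfl⟩ : x ∈ (amalgamProj A B i).range := by rwa [amalgamProj_range]
  rw [← amalgamCanonicalHom_of, ← hmap, Subgroup.mem_map_iff_mem hsplit.1] at hx
  exact Monoid.PushoutI.mem_of_of_mem_iSup (amalgamMaps_injective A B) hK hx

theorem IsAmalgamatedProduct.eq_of_sup_eq_top (hsplit : IsAmalgamatedProduct A B)
    {A₁ B₁ : Subgroup G} (hA₁A : A₁ ≤ A) (hB₁B : B₁ ≤ B) (hA₁ : A ⊓ B ≤ A₁) (hB₁ : A ⊓ B ≤ B₁)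
    (htop : A₁ ⊔ B₁ = ⊤) : A₁ = A ∧ B₁ = B := by
  have key := hsplit.sup_inf_le hA₁A hB₁B hA₁ hB₁
  simp only [htop, top_inf_eq] at key
  exact ⟨hA₁A.antisymm (key true), hB₁B.antisymm (key false)⟩

end Amalgam

theorem Subgroup.exists_finite_subset_of_mem_closure {G : Type*} [Group G] {s : Set G} {g : G}
    (hg : g ∈ Subgroup.closure s) : ∃ t ⊆ s, t.Finite ∧ g ∈ Subgroup.closure t := by
  induction hg using Subgroup.closure_induction with
  | mem x hx => exact ⟨{x}, by simpa using hx, Set.finite_singleton x, subset_closure rfl⟩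
  | one => exact ⟨∅, Set.empty_subset s, Set.finite_empty, one_mem _⟩
  | mul x y _ _ hx hy =>
    obtain ⟨t, hts, ht, hxt⟩ := hx
    obtain ⟨t', hts', ht', hyt'⟩ := hy
    exact ⟨t ∪ t', Set.union_subset hts hts', ht.union ht',
      mul_mem (closure_mono Set.subset_union_left hxt) (closure_mono Set.subset_union_right hyt')⟩
  | inv x _ hx =>
    obtain ⟨t, hts, ht, hxt⟩ := hx
    exact ⟨t, hts, ht, inv_mem hxt⟩

section Topology

variable {G : Type*} [Group G] [TopologicalSpace G]

theorem isCompactlyGeneratedGroup_closure {T : Set G} (hT : IsCompact T) :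
    IsCompactlyGeneratedGroup (Subgroup.closure T) := by
  refine ⟨Subtype.val ⁻¹' T, ?_, Subgroup.closure_closure_coe_preimage⟩
  rw [Subtype.isCompact_iff, Set.image_preimage_eq_of_subset]
  · exact hT
  · simp

theorem IsCompactlyGeneratedGroup.closure_union_finite {K : Subgroup G}
    (hK : IsCompactlyGeneratedGroup K) {F : Set G} (hF : F.Finite) :
    IsCompactlyGeneratedGroup (Subgroup.closure ((K : Set G) ∪ F)) := by
  obtain ⟨S, hS, hSK⟩ := hK
  have hK : Subgroup.closure (K.subtype '' S) = K := by
    rw [← MonoidHom.map_closure, hSK, ← MonoidHom.range_eq_map, Subgroup.range_subtype]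
  rw [Subgroup.closure_union, Subgroup.closure_eq, ← hK, ← Subgroup.closure_union]
  exact isCompactlyGeneratedGroup_closure ((hS.image continuous_subtype_val).union hF.isCompact)

theorem IsCompactlyGeneratedGroup.exists_finite_closure_union_eq_top [IsTopologicalGroup G]
    (hG : IsCompactlyGeneratedGroup G) {C : Subgroup G} (hC : IsOpen (C : Set G)) {s : Set G}
    (hs : Subgroup.closure s = ⊤) :
    ∃ t ⊆ s, t.Finite ∧ Subgroup.closure ((C : Set G) ∪ t) = ⊤ := by
  obtain ⟨S, hS, hSG⟩ := hG
  obtain ⟨u, hSu⟩ := compact_covered_by_mul_left_translates hS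
    (V := C) (by rw [hC.interior_eq]; exact ⟨1, C.one_mem⟩)
  choose t hts ht hgt using fun g : G =>
    Subgroup.exists_finite_subset_of_mem_closure (hs ▸ Subgroup.mem_top g)
  refine ⟨⋃ g ∈ u, t g, Set.iUnion₂_subset fun g _ => hts g,
    u.finite_toSet.biUnion fun g _ => ht g, ?_⟩
  rw [eq_top_iff, ← hSG, Subgroup.closure_le]
  intro x hx
  obtain ⟨g, hgu, hgx⟩ := Set.mem_iUnion₂.1 (hSu hx)
  have hg : g ∈ Subgroup.closure ((C : Set G) ∪ ⋃ g ∈ u, t g) :=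
    Subgroup.closure_mono (Set.subset_union_of_subset_right (Set.subset_biUnion_of_mem hgu) _)
      (hgt g)
  have hgx' : g * x ∈ Subgroup.closure ((C : Set G) ∪ ⋃ g ∈ u, t g) :=
    Subgroup.subset_closure (Or.inl hgx)
  simpa using mul_mem (inv_mem hg) hgx'

end Topology

theorem isCompactlyGenerated_factors_of_amalgamatedProduct_general
    {G : Type u} [Group G] [TopologicalSpace G] [IsTopologicalGroup G]
    (A B : Subgroup G)
    (hCopen : IsOpen ((A ⊓ B : Subgroup G) : Set G))
    (hsplit : IsAmalgamatedProduct A B)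
    (hG : IsCompactlyGeneratedGroup G)
    (hC : IsCompactlyGeneratedGroup ↥(A ⊓ B)) :
    IsCompactlyGeneratedGroup A ∧ IsCompactlyGeneratedGroup B := by
  obtain ⟨F, hFAB, hF, hFtop⟩ := hG.exists_finite_closure_union_eq_top hCopen (s := A ∪ B)
    (by rw [Subgroup.closure_union, Subgroup.closure_eq, Subgroup.closure_eq, hsplit.sup_eq_top])
  set A₁ := Subgroup.closure (((A ⊓ B : Subgroup G) : Set G) ∪ (F ∩ A))
  set B₁ := Subgroup.closure (((A ⊓ B : Subgroup G) : Set G) ∪ (F ∩ B))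
  have htop : A₁ ⊔ B₁ = ⊤ := by
    rw [eq_top_iff, ← hFtop, Subgroup.closure_le]
    rintro x (hx | hx)
    · exact Subgroup.mem_sup_left (Subgroup.subset_closure (Or.inl hx))
    · rcases hFAB hx with hxA | hxB
      · exact Subgroup.mem_sup_left (Subgroup.subset_closure (Or.inr ⟨hx, hxA⟩))
      · exact Subgroup.mem_sup_right (Subgroup.subset_closure (Or.inr ⟨hx, hxB⟩))
  obtain ⟨hA, hB⟩ := hsplit.eq_of_sup_eq_top
    ((Subgroup.closure_le _).2 (Set.union_subset inf_le_left Set.inter_subset_right))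
    ((Subgroup.closure_le _).2 (Set.union_subset inf_le_right Set.inter_subset_right))
    (fun x hx => Subgroup.subset_closure (Or.inl hx))
    (fun x hx => Subgroup.subset_closure (Or.inl hx)) htop
  exact ⟨hA ▸ hC.closure_union_finite (hF.inter_of_left _),
    hB ▸ hC.closure_union_finite (hF.inter_of_left _)⟩

/-- If `G` splits as an amalgamated free product of subgroups `A` and `B` over `C = A ⊓ B`,
where `C` is open and contains a compact open subgroup of `G`, and `G` and `C` are
compactly generated, then `A` and `B` are compactly generated. -/
theorem isCompactlyGenerated_factors_of_amalgamatedProduct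
    {G : Type u} [Group G] [TopologicalSpace G] [IsTopologicalGroup G] [T2Space G]
    (A B : Subgroup G)
    (hCopen : IsOpen ((A ⊓ B : Subgroup G) : Set G))
    (hU : ∃ U : Subgroup G, IsCompact (U : Set G) ∧ IsOpen (U : Set G) ∧ U ≤ A ⊓ B)
    (hsplit : IsAmalgamatedProduct A B)
    (hG : IsCompactlyGeneratedGroup G)
    (hC : IsCompactlyGeneratedGroup ↥(A ⊓ B)) :
    IsCompactlyGeneratedGroup A ∧ IsCompactlyGeneratedGroup B :=
  isCompactlyGenerated_factors_of_amalgamatedProduct_general A B hCopen hsplit hG hC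
end

section
/- Let G be a Hausdorff topological group, N a compact normal subgroup of G, and φ : G → G/N the quotient homomorphism. Let 𝒥 be a class of closed subgroups of G and let 𝒦 = { φ(Q) : Q ∈ 𝒥 }. Then G is 𝒥-coherent if and only if G/N is 𝒦-coherent. -/
open MulAction

universe u v

/-!
For a closed `Q`, the quotient map restricts to a continuous surjection `f : Q → φ(Q)` under
which compact sets have compact preimages, because `N` is compact; in particular its kernel
`Q ⊓ N` is compact. Compact generation passes along such a map in both directions, and so does
compact presentation, with explicit control of the relator length.

If `Q = ⟨S | relators of length ≤ n⟩` with `S` compact, then by Baire's theorem the compact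
kernel lies in a bounded power `(S ∪ S⁻¹ ∪ {1}) ^ M`, so `f(S)` presents `φ(Q)` with relators
of length at most `max n M`. Conversely, if `φ(Q) = ⟨T | relators of length ≤ n⟩`, take
`S = f⁻¹(T ∪ {1})` and `P = ⟨S | relators of length ≤ n + 4⟩`. Relators of length at most four
already make the letters of `S` lying in the kernel a normal subgroup `Z` of `P` that maps
isomorphically onto the kernel. Lifting each `t ∈ T` to a letter of `S` inverts `P / Z → φ(Q)`
on `⟨T | relators of length ≤ n⟩ ≅ φ(Q)`, so `P → Q` is injective.
-/

open Pointwise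

section Words

variable {G : Type*} [Group G]

abbrev wordEval (S : Set G) : FreeGroup S →* G := FreeGroup.lift (↑)

def shortRelators (S : Set G) (n : ℕ) : Set (FreeGroup S) :=
  {x | x ∈ (wordEval S).ker ∧ ∃ l : List (S × Bool), FreeGroup.mk l = x ∧ l.length ≤ n}

def presentationHom (S : Set G) (n : ℕ) : PresentedGroup (shortRelators S n) →* G :=
  PresentedGroup.toGroup fun _ hr => hr.1

@[simp]
theorem presentationHom_of {S : Set G} {n : ℕ} (s : S) :
    presentationHom S n (PresentedGroup.of s) = s :=
  PresentedGroup.toGroup.of _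

@[simp]
theorem presentationHom_mk {S : Set G} {n : ℕ} (x : FreeGroup S) :
    presentationHom S n (PresentedGroup.mk _ x) = wordEval S x :=
  rfl

theorem normalClosure_shortRelators_eq_ker_iff (S : Set G) (n : ℕ) :
    Subgroup.normalClosure (shortRelators S n) = (wordEval S).ker ↔
      Function.Injective (presentationHom S n) := by
  rw [injective_iff_map_eq_one]
  constructor
  · intro h p hp
    induction p with
    | H x => exact PresentedGroup.mk_eq_one_iff.2 (h ▸ hp)
  · intro h
    refine le_antisymm (PresentedGroup.closure_rels_subset_ker fun _ hr => hr.1) fun x hx => ?_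
    exact PresentedGroup.mk_eq_one_iff.1 (h _ hx)

theorem isCompactlyPresentedGroup_iff [TopologicalSpace G] :
    IsCompactlyPresentedGroup G ↔ ∃ (S : Set G) (n : ℕ), IsCompact S ∧
      Subgroup.closure S = ⊤ ∧ Function.Injective (presentationHom S n) :=
  exists_congr fun S => exists_congr fun n => and_congr_right' <| and_congr_right' <|
    normalClosure_shortRelators_eq_ker_iff S n

theorem surjective_presentationHom {S : Set G} (hS : Subgroup.closure S = ⊤) (n : ℕ) :
    Function.Surjective (presentationHom S n) := by
  rw [← MonoidHom.range_eq_top, MonoidHom.range_eq_map, ← PresentedGroup.closure_range_of,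
    MonoidHom.map_closure, ← Set.range_comp]
  convert hS
  ext g
  simp

theorem PresentedGroup.mk_eq_of_wordEval_eq {S : Set G} {m : ℕ} {l : List (S × Bool)}
    {s : S} (hl : l.length + 1 ≤ m) (hs : wordEval S (FreeGroup.mk l) = s) :
    PresentedGroup.mk (shortRelators S m) (FreeGroup.mk l) = PresentedGroup.of s := by
  refine PresentedGroup.mk_eq_mk_of_mul_inv_mem
    ⟨?_, l ++ [(s, false)], (FreeGroup.mul_mk ..).symm, by simpa using hl⟩
  simp [hs]

theorem exists_list_of_mem_pow {S : Set G} {m : ℕ} {g : G}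
    (hg : g ∈ (S ∪ S⁻¹ ∪ {1}) ^ m) :
    ∃ l : List (S × Bool), l.length ≤ m ∧ wordEval S (FreeGroup.mk l) = g := by
  induction m generalizing g with
  | zero => exact ⟨[], le_rfl, by simpa using hg.symm⟩
  | succ m ih =>
    obtain ⟨a, ha, b, ((hb | hb) | hb), rfl⟩ := hg
    all_goals obtain ⟨l, hl, rfl⟩ := ih ha
    · exact ⟨l ++ [(⟨b, hb⟩, true)], by simpa using hl, by simp⟩
    · exact ⟨l ++ [(⟨b⁻¹, hb⟩, false)], by simpa using hl, by simp⟩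
    · exact ⟨l, by omega, by simp [Set.mem_singleton_iff.1 hb]⟩

theorem exists_mem_pow_of_closure_eq_top {S : Set G} (hS : Subgroup.closure S = ⊤) (g : G) :
    ∃ m, g ∈ (S ∪ S⁻¹ ∪ {1}) ^ m := by
  have hg : g ∈ (Subgroup.closure S).toSubmonoid := hS ▸ Subgroup.mem_top g
  rw [Subgroup.closure_toSubmonoid] at hg
  induction hg using Submonoid.closure_induction with
  | mem x hx => exact ⟨1, by rw [pow_one]; exact Or.inl hx⟩
  | one => exact ⟨0, by simp⟩
  | mul _ _ _ _ hx hy =>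
    obtain ⟨j, hj⟩ := hx
    obtain ⟨k, hk⟩ := hy
    exact ⟨j + k, pow_add (S ∪ S⁻¹ ∪ {1}) j k ▸ Set.mul_mem_mul hj hk⟩

end Words

theorem isCompact_pow {M : Type*} [Monoid M] [TopologicalSpace M] [ContinuousMul M] {S : Set M}
    (hS : IsCompact S) (m : ℕ) : IsCompact (S ^ m) := by
  induction m with
  | zero => simp
  | succ m ih => simpa [pow_succ] using ih.mul hS

section Baire

variable {G : Type*} [Group G] [TopologicalSpace G] [IsTopologicalGroup G]

theorem exists_eq_univ_of_closed_submultiplicative_cover [CompactSpace G] [T2Space G]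
    (A : ℕ → Set G) (hA : ∀ k, IsClosed (A k)) (hmono : Monotone A)
    (hmul : ∀ j k, A j * A k ⊆ A (j + k))
    (hcover : ∀ g, ∃ k, g ∈ A k) : ∃ k, A k = Set.univ := by
  obtain ⟨m, x, hx⟩ :=
    nonempty_interior_of_iUnion_of_closed hA (Set.iUnion_eq_univ_iff.2 hcover)
  have hcover' : Set.univ ⊆ ⋃ k, interior (A k) := by
    intro c _
    obtain ⟨j, hj⟩ := hcover c
    obtain ⟨i, hi⟩ := hcover x⁻¹
    refine Set.mem_iUnion.2 ⟨j + i + m, mem_interior.2 ⟨(c * x⁻¹) • interior (A m), ?_,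
      isOpen_interior.smul _, ⟨x, hx, by simp⟩⟩⟩
    rintro _ ⟨y, hy, rfl⟩
    exact hmul _ _ (Set.mul_mem_mul (hmul _ _ (Set.mul_mem_mul hj hi)) (interior_subset hy))
  obtain ⟨k, hk⟩ := isCompact_univ.elim_directed_cover _ (fun _ => isOpen_interior) hcover'
    (Monotone.directed_le fun _ _ h => interior_mono (hmono h))
  exact ⟨k, Set.eq_univ_of_univ_subset (hk.trans interior_subset)⟩

theorem Subgroup.exists_subset_pow_of_isCompact [T2Space G] {S : Set G} (hS : IsCompact S)
    (hgen : Subgroup.closure S = ⊤) (K : Subgroup G) (hK : IsCompact (K : Set G)) :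
    ∃ M, (K : Set G) ⊆ (S ∪ S⁻¹ ∪ {1}) ^ M := by
  have : CompactSpace K := isCompact_iff_compactSpace.1 hK
  set B := S ∪ S⁻¹ ∪ {1}
  have hB : IsCompact B := (hS.union hS.inv).union isCompact_singleton
  obtain ⟨M, hM⟩ :=
    exists_eq_univ_of_closed_submultiplicative_cover (fun k => ((↑) : K → G) ⁻¹' B ^ k)
    (fun k => (isCompact_pow hB k).isClosed.preimage continuous_subtype_val)
    (fun _ _ h => Set.preimage_mono (Set.pow_subset_pow_right (Or.inr rfl) h))
    (fun j k => by
      rintro _ ⟨x, hx, y, hy, rfl⟩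
      exact pow_add B j k ▸ Set.mul_mem_mul hx hy)
    (fun z => exists_mem_pow_of_closure_eq_top hgen z)
  exact ⟨M, fun g hg => (Set.ext_iff.1 hM ⟨g, hg⟩).2 trivial⟩

end Baire

section Transfer

variable {G H : Type*} [Group G] [Group H]

theorem Subgroup.closure_image_eq_top (f : G →* H) (hf : Function.Surjective f) {S : Set G}
    (hS : Subgroup.closure S = ⊤) : Subgroup.closure (f '' S) = ⊤ := by
  rw [← MonoidHom.map_closure, hS, Subgroup.map_top_of_surjective f hf]

theorem Subgroup.closure_preimage_union_one_eq_top (f : G →* H) (hf : Function.Surjective f)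
    {T : Set H} (hT : Subgroup.closure T = ⊤) :
    Subgroup.closure (f ⁻¹' (T ∪ {1})) = ⊤ := by
  have hker : f.ker ≤ Subgroup.closure (f ⁻¹' (T ∪ {1})) := fun g hg =>
    Subgroup.subset_closure (Or.inr hg)
  have hmap : (Subgroup.closure (f ⁻¹' (T ∪ {1}))).map f = ⊤ := by
    rw [MonoidHom.map_closure, Set.image_preimage_eq _ hf, eq_top_iff, ← hT]
    exact Subgroup.closure_mono Set.subset_union_left
  rw [← sup_eq_left.2 hker, ← Subgroup.comap_map_eq, hmap, Subgroup.comap_top]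

theorem wordEval_map_of_forall_coe_eq (f : G →* H) {S : Set G} {T : Set H} {φ : S → T}
    (hφ : ∀ s, (φ s : H) = f s) (x : FreeGroup S) :
    wordEval T (FreeGroup.map φ x) = f (wordEval S x) := by
  rw [← MonoidHom.comp_apply, ← MonoidHom.comp_apply]
  congr 1
  exact FreeGroup.ext_hom _ _ fun s => by simp [hφ]

theorem map_mk_mem_shortRelators (f : G →* H) {S : Set G} {T : Set H} {φ : S → T}
    (hφ : ∀ s, (φ s : H) = f s) {n : ℕ} {l : List (S × Bool)} (hl : l.length ≤ n)
    (h : f (wordEval S (FreeGroup.mk l)) = 1) :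
    FreeGroup.map φ (FreeGroup.mk l) ∈ shortRelators T n :=
  ⟨by rw [MonoidHom.mem_ker, wordEval_map_of_forall_coe_eq f hφ, h],
    _, FreeGroup.map.mk.symm, by simpa using hl⟩

@[simp]
theorem PresentedGroup.map_mk {α β : Type*} (φ : FreeGroup α →* FreeGroup β)
    {s : Set (FreeGroup α)} {t : Set (FreeGroup β)} (hst : s.MapsTo φ t) (x : FreeGroup α) :
    PresentedGroup.map φ hst (PresentedGroup.mk s x) = PresentedGroup.mk t (φ x) :=
  rfl

theorem injective_presentationHom_image (f : G →* H) {S : Set G} {n M : ℕ}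
    (hinj : Function.Injective (presentationHom S n))
    (hker : ∀ g ∈ f.ker,
      ∃ l : List (S × Bool), l.length ≤ M ∧ wordEval S (FreeGroup.mk l) = g) :
    Function.Injective (presentationHom (f '' S) (max n M)) := by
  let φ : S → f '' S := fun s => ⟨f s, Set.mem_image_of_mem f s.2⟩
  have hφ : ∀ s, (φ s : H) = f s := fun _ => rfl
  have hmaps : Set.MapsTo (FreeGroup.map φ) (shortRelators S n)
      (shortRelators (f '' S) (max n M)) := by
    rintro _ ⟨hx, l, rfl, hl⟩
    exact map_mk_mem_shortRelators f hφ (hl.trans (le_max_left n M)) (by rw [hx, map_one])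
  let Γ := PresentedGroup.map (FreeGroup.map φ) hmaps
  have hΓ : Function.Surjective Γ := by
    intro p
    induction p with
    | H x =>
      have hφsurj : Function.Surjective φ := by
        rintro ⟨_, s, hs, rfl⟩
        exact ⟨⟨s, hs⟩, rfl⟩
      obtain ⟨y, rfl⟩ := FreeGroup.map_surjective hφsurj x
      exact ⟨PresentedGroup.mk _ y, rfl⟩
  have hcomm : (presentationHom (f '' S) (max n M)).comp Γ = f.comp (presentationHom S n) :=
    PresentedGroup.ext fun s => by simp [Γ, PresentedGroup.of, hφ]
  refine (injective_iff_map_eq_one _).2 fun p hp => ?_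
  obtain ⟨q, rfl⟩ := hΓ p
  have hq : f (presentationHom S n q) = 1 := by rw [← MonoidHom.comp_apply, ← hcomm]; exact hp
  obtain ⟨l, hl, hlq⟩ := hker _ hq
  obtain rfl : q = PresentedGroup.mk _ (FreeGroup.mk l) := hinj (by rw [presentationHom_mk, hlq])
  exact PresentedGroup.one_of_mem
    (map_mk_mem_shortRelators f hφ (hl.trans (le_max_right n M)) (by rw [hlq, hq]))

end Transfer

section SubgroupLetters

variable {G : Type*} [Group G] {S : Set G} {m : ℕ}

def subgroupLetters (K : Subgroup G) (hK : (K : Set G) ⊆ S) (hm : 3 ≤ m) :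
    K →* PresentedGroup (shortRelators S m) where
  toFun z := PresentedGroup.of ⟨z, hK z.2⟩
  map_one' := (PresentedGroup.mk_eq_of_wordEval_eq (l := [])
    (by simp only [List.length_nil]; omega) (by simp)).symm
  map_mul' a b := by
    change _ = PresentedGroup.mk _
      (FreeGroup.mk [((⟨a, hK a.2⟩ : S), true), (⟨b, hK b.2⟩, true)])
    exact (PresentedGroup.mk_eq_of_wordEval_eq (by simpa using hm) (by simp)).symm

variable (K : Subgroup G) (hK : (K : Set G) ⊆ S)

@[simp]
theorem presentationHom_subgroupLetters (hm : 3 ≤ m) (z : K) :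
    presentationHom S m (subgroupLetters K hK hm z) = z :=
  presentationHom_of _

theorem mk_mem_range_subgroupLetters (hm : 3 ≤ m) {l : List (S × Bool)} (hl : l.length + 1 ≤ m)
    (hlK : wordEval S (FreeGroup.mk l) ∈ K) :
    PresentedGroup.mk _ (FreeGroup.mk l) ∈ (subgroupLetters K hK hm).range :=
  ⟨⟨_, hlK⟩, (PresentedGroup.mk_eq_of_wordEval_eq (s := ⟨_, hK hlK⟩) hl rfl).symm⟩

theorem subgroupLetters_range_normal [hN : K.Normal] (hm : 4 ≤ m) :
    (subgroupLetters K hK (by omega : 3 ≤ m)).range.Normal := by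
  set σ := subgroupLetters K hK (by omega : 3 ≤ m)
  have hconj (s : S) (z : K) : PresentedGroup.of s * σ z * (PresentedGroup.of s)⁻¹ =
      σ ⟨s * z * (s : G)⁻¹, hN.conj_mem z z.2 s⟩ := by
    change PresentedGroup.mk _ (FreeGroup.mk [(s, true), (⟨z, hK z.2⟩, true), (s, false)]) = _
    exact PresentedGroup.mk_eq_of_wordEval_eq (by simpa using hm) (by simp [mul_assoc])
  have hconj' (s : S) (z : K) : (PresentedGroup.of s)⁻¹ * σ z * PresentedGroup.of s =
      σ ⟨(s : G)⁻¹ * z * s, hN.conj_mem' z z.2 s⟩ := by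
    change PresentedGroup.mk _ (FreeGroup.mk [(s, false), (⟨z, hK z.2⟩, true), (s, true)]) = _
    exact PresentedGroup.mk_eq_of_wordEval_eq (by simpa using hm) (by simp [mul_assoc])
  rw [← Subgroup.normalizer_eq_top_iff, eq_top_iff, ← PresentedGroup.closure_range_of,
    Subgroup.closure_le]
  rintro _ ⟨s, rfl⟩
  refine Subgroup.mem_normalizer_iff.2 fun h => ⟨?_, ?_⟩
  · rintro ⟨z, rfl⟩
    exact ⟨_, (hconj s z).symm⟩
  · rintro ⟨z, hz⟩
    exact ⟨_, by rw [← hconj' s, hz]; group⟩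

theorem injective_presentationHom_of_factors (hm : 3 ≤ m)
    [(subgroupLetters K hK hm).range.Normal]
    (β : G →* PresentedGroup (shortRelators S m) ⧸ (subgroupLetters K hK hm).range)
    (hβ : β.comp (presentationHom S m) = QuotientGroup.mk' _) :
    Function.Injective (presentationHom S m) := by
  refine (injective_iff_map_eq_one _).2 fun p hp => ?_
  have hpZ : (p : _ ⧸ (subgroupLetters K hK hm).range) = 1 := by
    rw [← QuotientGroup.mk'_apply, ← hβ, MonoidHom.comp_apply, hp, map_one]
  obtain ⟨z, rfl⟩ := (QuotientGroup.eq_one_iff p).1 hpZ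
  obtain rfl : z = 1 := Subtype.ext ((presentationHom_subgroupLetters K hK hm z).symm.trans hp)
  exact map_one _

end SubgroupLetters

theorem injective_presentationHom_preimage {G H : Type*} [Group G] [Group H] (f : G →* H)
    (hf : Function.Surjective f) {T : Set H} {n : ℕ} (hT : Subgroup.closure T = ⊤)
    (hinj : Function.Injective (presentationHom T n)) :
    Function.Injective (presentationHom (f ⁻¹' (T ∪ {1})) (n + 4)) := by
  set S := f ⁻¹' (T ∪ {1})
  have hK : (f.ker : Set G) ⊆ S := fun _ hg => Or.inr hg
  set σ := subgroupLetters f.ker hK (m := n + 4) (by omega)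
  have := subgroupLetters_range_normal f.ker hK (m := n + 4) le_add_self
  set ρ := QuotientGroup.mk' σ.range
  have hρ (l : List (S × Bool)) (hl : l.length ≤ n + 3)
      (hl' : f (wordEval S (FreeGroup.mk l)) = 1) :
      ρ (PresentedGroup.mk _ (FreeGroup.mk l)) = 1 :=
    (QuotientGroup.eq_one_iff _).2 (mk_mem_range_subgroupLetters f.ker hK _ (by omega) hl')
  choose τ hτ using fun t : T => hf t
  let τS : T → S := fun t => ⟨τ t, Or.inl (by simp [hτ t])⟩
  have hτS (x : FreeGroup T) : f (wordEval S (FreeGroup.map τS x)) = wordEval T x :=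
    DFunLike.congr_fun (FreeGroup.ext_hom (f.comp ((wordEval S).comp (FreeGroup.map τS)))
      (wordEval T) fun t => by simp [τS, hτ]) x
  let α : PresentedGroup (shortRelators T n) →* _ ⧸ σ.range :=
    PresentedGroup.toGroup (f := fun t => ρ (PresentedGroup.of (τS t))) <| by
      rintro _ ⟨hr, l, rfl, hl⟩
      rw [← FreeGroup.lift_unique (ρ.comp ((PresentedGroup.mk _).comp (FreeGroup.map τS)))
        (f := fun t => ρ (PresentedGroup.of (τS t))) fun _ => rfl, MonoidHom.comp_apply,
        MonoidHom.comp_apply, FreeGroup.map.mk]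
      exact hρ _ (by rw [List.length_map]; omega) (by rw [← FreeGroup.map.mk, hτS]; exact hr)
  let e := MulEquiv.ofBijective _ ⟨hinj, surjective_presentationHom hT n⟩
  refine injective_presentationHom_of_factors f.ker hK _ ((α.comp e.symm.toMonoidHom).comp f) ?_
  refine PresentedGroup.ext fun s => ?_
  by_cases hs : f s ∈ T
  · have : e.symm (f s) = PresentedGroup.of ⟨f s, hs⟩ :=
      e.symm_apply_eq.2 (presentationHom_of (n := n) ⟨f s, hs⟩).symm
    simp only [MonoidHom.comp_apply, presentationHom_of, MulEquiv.coe_toMonoidHom, this,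
      α, PresentedGroup.toGroup.of]
    rw [← inv_mul_eq_one, ← map_inv, ← map_mul]
    change ρ (PresentedGroup.mk _ (FreeGroup.mk [(τS ⟨f s, hs⟩, false), (s, true)])) = 1
    exact hρ _ (by simp) (by simp [τS, hτ])
  · have h1 : f s = 1 := s.2.resolve_left hs
    simp only [MonoidHom.comp_apply, presentationHom_of, h1, map_one]
    exact (hρ [(s, true)] (by simp) (by simp [h1])).symm

section Topological

variable {G H : Type*} [Group G] [Group H] [TopologicalSpace G] [TopologicalSpace H]

theorem IsCompactlyGeneratedGroup.of_surjective (f : G →* H) (hf : Continuous f)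
    (hsurj : Function.Surjective f) (hG : IsCompactlyGeneratedGroup G) :
    IsCompactlyGeneratedGroup H :=
  let ⟨S, hS, hgen⟩ := hG
  ⟨f '' S, hS.image hf, Subgroup.closure_image_eq_top f hsurj hgen⟩

theorem IsCompactlyGeneratedGroup.of_surjective_of_isCompact_preimage (f : G →* H)
    (hsurj : Function.Surjective f) (hprop : ∀ T, IsCompact T → IsCompact (f ⁻¹' T))
    (hH : IsCompactlyGeneratedGroup H) : IsCompactlyGeneratedGroup G :=
  let ⟨_, hT, hgen⟩ := hH
  ⟨_, hprop _ (hT.union isCompact_singleton),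
    Subgroup.closure_preimage_union_one_eq_top f hsurj hgen⟩

theorem IsCompactlyPresentedGroup.of_surjective [IsTopologicalGroup G] [T2Space G]
    (f : G →* H) (hf : Continuous f) (hsurj : Function.Surjective f)
    (hker : IsCompact (f.ker : Set G)) (hG : IsCompactlyPresentedGroup G) :
    IsCompactlyPresentedGroup H := by
  obtain ⟨S, n, hS, hgen, hinj⟩ := isCompactlyPresentedGroup_iff.1 hG
  obtain ⟨M, hM⟩ := Subgroup.exists_subset_pow_of_isCompact hS hgen f.ker hker
  exact isCompactlyPresentedGroup_iff.2 ⟨f '' S, max n M, hS.image hf,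
    Subgroup.closure_image_eq_top f hsurj hgen,
    injective_presentationHom_image f hinj fun _ hg => exists_list_of_mem_pow (hM hg)⟩

theorem IsCompactlyPresentedGroup.of_surjective_of_isCompact_preimage (f : G →* H)
    (hsurj : Function.Surjective f) (hprop : ∀ T, IsCompact T → IsCompact (f ⁻¹' T))
    (hH : IsCompactlyPresentedGroup H) : IsCompactlyPresentedGroup G := by
  obtain ⟨T, n, hT, hgen, hinj⟩ := isCompactlyPresentedGroup_iff.1 hH
  exact isCompactlyPresentedGroup_iff.2 ⟨_, n + 4, hprop _ (hT.union isCompact_singleton),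
    Subgroup.closure_preimage_union_one_eq_top f hsurj hgen,
    injective_presentationHom_preimage f hsurj hgen hinj⟩

theorem MonoidHom.isCompact_preimage_subgroupMap (f : G →* H)
    (hprop : ∀ T, IsCompact T → IsCompact (f ⁻¹' T)) {Q : Subgroup G}
    (hQ : IsClosed (Q : Set G)) {T : Set (Q.map f)} (hT : IsCompact T) :
    IsCompact (f.subgroupMap Q ⁻¹' T) := by
  have hpre : f.subgroupMap Q ⁻¹' T = (↑) ⁻¹' (f ⁻¹' ((↑) '' T)) := by
    ext q
    exact ⟨fun h => ⟨_, h, rfl⟩, fun ⟨t, ht, hteq⟩ =>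
      show f.subgroupMap Q q ∈ T from (Subtype.ext hteq : t = f.subgroupMap Q q) ▸ ht⟩
  rw [hpre, Subtype.isCompact_iff, Set.image_preimage_eq_inter_range, Subtype.range_coe]
  exact (hprop _ (hT.image continuous_subtype_val)).inter_right hQ

end Topological

theorem QuotientGroup.isCompact_preimage_mk {G : Type*} [Group G] [TopologicalSpace G]
    [IsTopologicalGroup G] {N : Subgroup G} (hN : IsCompact (N : Set G)) {T : Set (G ⧸ N)}
    (hT : IsCompact T) : IsCompact (((↑) : G → G ⧸ N) ⁻¹' T) := by
  refine (isProperMap_iff_isClosedMap_and_compact_fibers.2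
    ⟨continuous_quot_mk, QuotientGroup.isClosedMap_coe hN, fun y => ?_⟩).isCompact_preimage hT
  obtain ⟨g, rfl⟩ := QuotientGroup.mk_surjective y
  change IsCompact (((↑) : G → G ⧸ N) ⁻¹' {(g : G ⧸ N)})
  rw [← Set.image_singleton, QuotientGroup.preimage_image_mk_eq_mul]
  exact isCompact_singleton.mul hN

/-- For a compact normal subgroup `N` of `G` and a class `𝒥` of closed subgroups of `G`
with image class `𝒦` in `G/N`, the group `G` is `𝒥`-coherent iff `G/N` is `𝒦`-coherent. -/
theorem jCoherent_iff_quotient_jCoherent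
    {G : Type u} [Group G] [TopologicalSpace G] [IsTopologicalGroup G] [T2Space G]
    (N : Subgroup G) [N.Normal] (hN : IsCompact (N : Set G))
    (𝒥 : Set (Subgroup G)) (h𝒥 : ∀ Q ∈ 𝒥, IsClosed (Q : Set G)) :
    (∀ Q ∈ 𝒥, IsCompactlyGeneratedGroup Q → IsCompactlyPresentedGroup Q) ↔
      (∀ K ∈ {K : Subgroup (G ⧸ N) | ∃ Q ∈ 𝒥, K = Subgroup.map (QuotientGroup.mk' N) Q},
        IsCompactlyGeneratedGroup K → IsCompactlyPresentedGroup K) := by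
  set φ := QuotientGroup.mk' N
  have hcont (Q : Subgroup G) : Continuous (φ.subgroupMap Q) :=
    (continuous_quot_mk.comp continuous_subtype_val).subtype_mk _
  have hprop (Q : Subgroup G) (hQ : Q ∈ 𝒥) (T) (hT : IsCompact T) :
      IsCompact (φ.subgroupMap Q ⁻¹' T) :=
    φ.isCompact_preimage_subgroupMap (fun _ => QuotientGroup.isCompact_preimage_mk hN)
      (h𝒥 Q hQ) hT
  have hsurj (Q : Subgroup G) : Function.Surjective (φ.subgroupMap Q) :=
    φ.subgroupMap_surjective Q
  constructor
  · rintro h𝒥coh _ ⟨Q, hQ, rfl⟩ hcg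
    refine .of_surjective _ (hcont Q) (hsurj Q) ?_ (h𝒥coh Q hQ
      (.of_surjective_of_isCompact_preimage _ (hsurj Q) (hprop Q hQ) hcg))
    exact hprop Q hQ {1} isCompact_singleton
  · intro h𝒦coh Q hQ hcg
    exact .of_surjective_of_isCompact_preimage _ (hsurj Q) (hprop Q hQ)
      (h𝒦coh _ ⟨Q, hQ, rfl⟩ (.of_surjective _ (hcont Q) (hsurj Q) hcg))
end
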